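/- Let k ≥ 2 and let P be the graph of a k-polygon, with H its set of horizontal segments and V its set of vertical segments. Then P has exactly two triangle hitting sets of size k, namely the set H and the set V. -/
import Mathlib


/-- A point of the plane. -/
abbrev Pt := ℝ × ℝ

/-- The closed segment with the given pair of endpoints (possibly degenerate). -/
def seg (e : Pt × Pt) : Set Pt := segment ℝ e.1 e.2

/-- A `k`-polygon: `k` pairwise disjoint horizontal closed segments of positive length
and `k` pairwise disjoint vertical closed segments of positive length, each horizontal
segment meeting exactly two vertical ones and vice-versa. -/
structure KPolygon (k : ℕ) where
  H : Fin k → Pt × Pt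
  V : Fin k → Pt × Pt
  H_horiz : ∀ i, (H i).1.2 = (H i).2.2
  V_vert : ∀ j, (V j).1.1 = (V j).2.1
  H_pos : ∀ i, (H i).1 ≠ (H i).2
  V_pos : ∀ j, (V j).1 ≠ (V j).2
  H_disj : ∀ i i', i ≠ i' → seg (H i) ∩ seg (H i') = ∅
  V_disj : ∀ j j', j ≠ j' → seg (V j) ∩ seg (V j') = ∅
  H_meets : ∀ i, {j : Fin k | (seg (H i) ∩ seg (V j)).Nonempty}.ncard = 2
  V_meets : ∀ j, {i : Fin k | (seg (H i) ∩ seg (V j)).Nonempty}.ncard = 2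

/-- The corners of a `k`-polygon: the (intersection points of the) intersecting
horizontal/vertical pairs. -/
abbrev KPolygon.Corner {k : ℕ} (P : KPolygon k) : Type :=
  {ij : Fin k × Fin k // (seg (P.H ij.1) ∩ seg (P.V ij.2)).Nonempty}

/-- The vertex set of the graph of a `k`-polygon: the horizontal segments, the
vertical segments, and the corners. -/
abbrev KPolygon.Vtx {k : ℕ} (P : KPolygon k) : Type :=
  Fin k ⊕ Fin k ⊕ P.Corner

/-- The graph of a `k`-polygon: two segments are adjacent iff they intersect, and a
corner is adjacent exactly to the horizontal and the vertical segment whose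
intersection it is. -/
def KPolygon.graph {k : ℕ} (P : KPolygon k) : SimpleGraph P.Vtx :=
  SimpleGraph.fromRel (fun a b =>
    match a, b with
    | Sum.inl i, Sum.inr (Sum.inl j) => (seg (P.H i) ∩ seg (P.V j)).Nonempty
    | Sum.inr (Sum.inr c), Sum.inl i => c.1.1 = i
    | Sum.inr (Sum.inr c), Sum.inr (Sum.inl j) => c.1.2 = j
    | _, _ => False)

/-- A triangle of a graph: a set of three pairwise adjacent vertices. -/
def IsTriangle {W : Type*} (G : SimpleGraph W) (T : Finset W) : Prop :=
  T.card = 3 ∧ ∀ a ∈ T, ∀ b ∈ T, a ≠ b → G.Adj a b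

namespace KPolygon
variable {k : ℕ} (P : KPolygon k)

lemma adj_HV {i j : Fin k} :
    P.graph.Adj (Sum.inl i) (Sum.inr (Sum.inl j)) ↔ (seg (P.H i) ∩ seg (P.V j)).Nonempty := by
  simp [KPolygon.graph, SimpleGraph.fromRel_adj]

lemma adj_Hc {i : Fin k} {c : P.Corner} :
    P.graph.Adj (Sum.inl i) (Sum.inr (Sum.inr c)) ↔ c.1.1 = i := by
  simp [KPolygon.graph, SimpleGraph.fromRel_adj]

lemma adj_Vc {j : Fin k} {c : P.Corner} :
    P.graph.Adj (Sum.inr (Sum.inl j)) (Sum.inr (Sum.inr c)) ↔ c.1.2 = j := by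
  simp [KPolygon.graph, SimpleGraph.fromRel_adj]

lemma not_adj_HH {i i' : Fin k} : ¬ P.graph.Adj (Sum.inl i) (Sum.inl i') := by
  simp [KPolygon.graph, SimpleGraph.fromRel_adj]

lemma not_adj_VV {j j' : Fin k} :
    ¬ P.graph.Adj (Sum.inr (Sum.inl j)) (Sum.inr (Sum.inl j')) := by
  simp [KPolygon.graph, SimpleGraph.fromRel_adj]

lemma not_adj_cc {c c' : P.Corner} :
    ¬ P.graph.Adj (Sum.inr (Sum.inr c)) (Sum.inr (Sum.inr c')) := by
  simp [KPolygon.graph, SimpleGraph.fromRel_adj]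


/-- The triangle attached to a corner. -/
def tri (c : P.Corner) : Finset P.Vtx :=
  {Sum.inl c.1.1, Sum.inr (Sum.inl c.1.2), Sum.inr (Sum.inr c)}

lemma tri_isTriangle (c : P.Corner) : IsTriangle P.graph (P.tri c) := by
  constructor
  · simp [tri]
  · intro a ha b hb hab
    simp only [tri, Finset.mem_insert, Finset.mem_singleton] at ha hb
    rcases ha with rfl | rfl | rfl <;> rcases hb with rfl | rfl | rfl <;>
      first
      | exact absurd rfl hab
      | exact (P.adj_HV).mpr c.2
      | exact (P.adj_Hc).mpr rfl
      | exact (P.adj_Vc).mpr rfl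
      | exact ((P.adj_HV).mpr c.2).symm
      | exact ((P.adj_Hc).mpr rfl).symm
      | exact ((P.adj_Vc).mpr rfl).symm

/-- class of a vertex -/
def cls : P.Vtx → ℕ
  | Sum.inl _ => 0
  | Sum.inr (Sum.inl _) => 1
  | Sum.inr (Sum.inr _) => 2

lemma cls_ne_of_adj {a b : P.Vtx} (h : P.graph.Adj a b) : P.cls a ≠ P.cls b := by
  rcases a with i | j | c <;> rcases b with i' | j' | c' <;> simp [cls]
  · exact P.not_adj_HH h
  · exact P.not_adj_VV h
  · exact P.not_adj_cc h

lemma tri_mem {T : Finset P.Vtx} (hT : IsTriangle P.graph T) :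
    (∃ i, Sum.inl i ∈ T) ∧ (∃ j, Sum.inr (Sum.inl j) ∈ T) := by
  obtain ⟨hcard, hadj⟩ := hT
  obtain ⟨a, b, c, hab, hac, hbc, rfl⟩ := Finset.card_eq_three.mp hcard
  have ha : a ∈ ({a, b, c} : Finset P.Vtx) := by simp
  have hb : b ∈ ({a, b, c} : Finset P.Vtx) := by simp
  have hc : c ∈ ({a, b, c} : Finset P.Vtx) := by simp
  have h1 := P.cls_ne_of_adj (hadj a ha b hb hab)
  have h2 := P.cls_ne_of_adj (hadj a ha c hc hac)
  have h3 := P.cls_ne_of_adj (hadj b hb c hc hbc)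
  have b1 : P.cls a ≤ 2 := by rcases a with _|_|_ <;> simp [cls]
  have b2 : P.cls b ≤ 2 := by rcases b with _|_|_ <;> simp [cls]
  have b3 : P.cls c ≤ 2 := by rcases c with _|_|_ <;> simp [cls]
  constructor
  · have h0 : P.cls a = 0 ∨ P.cls b = 0 ∨ P.cls c = 0 := by omega
    rcases h0 with h0 | h0 | h0
    · rcases a with i|j|cc
      · exact ⟨i, ha⟩
      · simp [cls] at h0
      · simp [cls] at h0
    · rcases b with i|j|cc
      · exact ⟨i, hb⟩
      · simp [cls] at h0
      · simp [cls] at h0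
    · rcases c with i|j|cc
      · exact ⟨i, hc⟩
      · simp [cls] at h0
      · simp [cls] at h0
  · have h0 : P.cls a = 1 ∨ P.cls b = 1 ∨ P.cls c = 1 := by omega
    rcases h0 with h0 | h0 | h0
    · rcases a with i|j|cc
      · simp [cls] at h0
      · exact ⟨j, ha⟩
      · simp [cls] at h0
    · rcases b with i|j|cc
      · simp [cls] at h0
      · exact ⟨j, hb⟩
      · simp [cls] at h0
    · rcases c with i|j|cc
      · simp [cls] at h0
      · exact ⟨j, hc⟩
      · simp [cls] at h0


open Classical

noncomputable instance : Fintype P.Corner := Fintype.ofFinite _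

lemma card_corner : Fintype.card P.Corner = 2 * k := by
  rw [Fintype.card_congr
    (Equiv.subtypeProdEquivSigmaSubtype
      (fun i j : Fin k => (seg (P.H i) ∩ seg (P.V j)).Nonempty))]
  rw [Fintype.card_sigma]
  have : ∀ i : Fin k,
      Fintype.card {j // (seg (P.H i) ∩ seg (P.V j)).Nonempty} = 2 := by
    intro i
    have := P.H_meets i
    rwa [← Nat.card_coe_set_eq, Nat.card_eq_fintype_card,
      Fintype.card_congr (Equiv.setCongr rfl)] at this
  simp [this, Finset.sum_const, mul_comm]

lemma card_fst (i : Fin k) : Fintype.card {c : P.Corner // c.1.1 = i} = 2 := by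
  have e : {c : P.Corner // c.1.1 = i} ≃
      {j : Fin k // (seg (P.H i) ∩ seg (P.V j)).Nonempty} :=
    { toFun := fun c => ⟨c.1.1.2, by have := c.1.2; rw [c.2] at this; exact this⟩
      invFun := fun j => ⟨⟨(i, j.1), j.2⟩, rfl⟩
      left_inv := by rintro ⟨⟨⟨i', j'⟩, h⟩, rfl⟩; rfl
      right_inv := by rintro ⟨j, h⟩; rfl }
  rw [Fintype.card_congr e]
  have := P.H_meets i
  rwa [← Nat.card_coe_set_eq, Nat.card_eq_fintype_card,
      Fintype.card_congr (Equiv.setCongr rfl)] at this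

lemma card_snd (j : Fin k) : Fintype.card {c : P.Corner // c.1.2 = j} = 2 := by
  have e : {c : P.Corner // c.1.2 = j} ≃
      {i : Fin k // (seg (P.H i) ∩ seg (P.V j)).Nonempty} :=
    { toFun := fun c => ⟨c.1.1.1, by have := c.1.2; rw [c.2] at this; exact this⟩
      invFun := fun i => ⟨⟨(i.1, j), i.2⟩, rfl⟩
      left_inv := by rintro ⟨⟨⟨i', j'⟩, h⟩, rfl⟩; rfl
      right_inv := by rintro ⟨i, h⟩; rfl }
  rw [Fintype.card_congr e]
  have := P.V_meets j
  rwa [← Nat.card_coe_set_eq, Nat.card_eq_fintype_card,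
      Fintype.card_congr (Equiv.setCongr rfl)] at this


lemma key_structure (hk : 2 ≤ k) {S : Set P.Vtx}
    (hhit : ∀ T : Finset P.Vtx, IsTriangle P.graph T → ∃ x ∈ S, x ∈ T)
    (hcard : S.ncard = k) :
    (∀ c : P.Corner, (Sum.inr (Sum.inr c) : P.Vtx) ∉ S) ∧
    (∀ c : P.Corner, (Sum.inl c.1.1 : P.Vtx) ∈ S ∨ (Sum.inr (Sum.inl c.1.2) : P.Vtx) ∈ S) ∧
    (∀ c : P.Corner, ¬((Sum.inl c.1.1 : P.Vtx) ∈ S ∧ (Sum.inr (Sum.inl c.1.2) : P.Vtx) ∈ S)) := by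
  have hSfin : S.Finite := by
    by_contra h
    rw [Set.Infinite.ncard h] at hcard; omega
  set S' : Finset P.Vtx := hSfin.toFinset with hS'
  have hS'card : S'.card = k := by
    rw [hS', ← Set.ncard_eq_toFinset_card S hSfin]; exact hcard
  have hex : ∀ c : P.Corner, ∃ x, x ∈ S ∧ x ∈ P.tri c := by
    intro c
    obtain ⟨x, hxS, hxT⟩ := hhit (P.tri c) (P.tri_isTriangle c)
    exact ⟨x, hxS, hxT⟩
  choose f hfS hfT using hex
  -- the finset of corners whose triangle contains s
  let corn : P.Vtx → Finset P.Corner := fun s => Finset.univ.filter (fun c => s ∈ P.tri c)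
  let fib : P.Vtx → Finset P.Corner := fun s => Finset.univ.filter (fun c => f c = s)
  have hfib_sub : ∀ s, fib s ⊆ corn s := by
    intro s c hc
    simp only [fib, Finset.mem_filter, Finset.mem_univ, true_and] at hc
    simp only [corn, Finset.mem_filter, Finset.mem_univ, true_and]
    rw [← hc]; exact hfT c
  have hcorn_inl : ∀ i : Fin k, (corn (Sum.inl i)).card = 2 := by
    intro i
    have : corn (Sum.inl i) = Finset.univ.filter (fun c : P.Corner => c.1.1 = i) := by
      apply Finset.filter_congr
      intro c _
      simp [tri, eq_comm]
    rw [this, ← Fintype.card_subtype]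
    exact P.card_fst i
  have hcorn_inr : ∀ j : Fin k, (corn (Sum.inr (Sum.inl j))).card = 2 := by
    intro j
    have : corn (Sum.inr (Sum.inl j)) = Finset.univ.filter (fun c : P.Corner => c.1.2 = j) := by
      apply Finset.filter_congr
      intro c _
      simp [tri, eq_comm]
    rw [this, ← Fintype.card_subtype]
    exact P.card_snd j
  have hcorn_cc : ∀ c' : P.Corner, (corn (Sum.inr (Sum.inr c'))).card = 1 := by
    intro c'
    have : corn (Sum.inr (Sum.inr c')) = {c'} := by
      ext c
      simp [corn, tri, eq_comm]
    rw [this]; simp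
  have hcorn_le : ∀ s ∈ S', (corn s).card ≤ 2 := by
    intro s _
    rcases s with i | j | c
    · exact le_of_eq (hcorn_inl i)
    · exact le_of_eq (hcorn_inr j)
    · exact le_trans (le_of_eq (hcorn_cc c)) one_le_two
  have hfib_le : ∀ s ∈ S', (fib s).card ≤ 2 := fun s hs =>
    le_trans (Finset.card_le_card (hfib_sub s)) (hcorn_le s hs)
  have hmemS' : ∀ x, x ∈ S' ↔ x ∈ S := by
    intro x; rw [hS', Set.Finite.mem_toFinset]
  have hsum : ∑ s ∈ S', (fib s).card = 2 * k := by
    have := Finset.card_eq_sum_card_fiberwise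
      (f := f) (s := (Finset.univ : Finset P.Corner)) (t := S')
      (fun c _ => (hmemS' _).mpr (hfS c))
    rw [← this, Finset.card_univ, P.card_corner]
  have hfib_eq : ∀ s ∈ S', (fib s).card = 2 := by
    by_contra h
    push_neg at h
    obtain ⟨s0, hs0, hne⟩ := h
    have hlt : ∑ s ∈ S', (fib s).card < ∑ s ∈ S', 2 :=
      Finset.sum_lt_sum hfib_le ⟨s0, hs0, lt_of_le_of_ne (hfib_le s0 hs0) hne⟩
    rw [hsum, Finset.sum_const, hS'card, smul_eq_mul] at hlt
    omega
  -- no corners in S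
  have hnoc : ∀ c : P.Corner, (Sum.inr (Sum.inr c) : P.Vtx) ∉ S := by
    intro c hc
    have h1 := hfib_eq _ ((hmemS' _).mpr hc)
    have h2 : (fib (Sum.inr (Sum.inr c))).card ≤ 1 :=
      le_trans (Finset.card_le_card (hfib_sub _)) (le_of_eq (hcorn_cc c))
    omega
  -- fib = corn on S'
  have hfib_corn : ∀ s ∈ S', fib s = corn s := by
    intro s hs
    apply Finset.eq_of_subset_of_card_le (hfib_sub s)
    rw [hfib_eq s hs]
    exact hcorn_le s hs
  have hmem_corn : ∀ (c : P.Corner) (s : P.Vtx), s ∈ P.tri c → c ∈ corn s := by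
    intro c s hcs
    simp [corn, hcs]
  refine ⟨hnoc, ?_, ?_⟩
  · intro c
    have := hfT c
    simp only [tri, Finset.mem_insert, Finset.mem_singleton] at this
    rcases this with h | h | h
    · left; rw [← h]; exact hfS c
    · right; rw [← h]; exact hfS c
    · exfalso; exact hnoc c (h ▸ hfS c)
  · rintro c ⟨h1, h2⟩
    have e1 : f c = Sum.inl c.1.1 := by
      have : c ∈ fib (Sum.inl c.1.1) := by
        rw [hfib_corn _ ((hmemS' _).mpr h1)]
        exact hmem_corn c _ (by simp [tri])
      simpa [fib] using this
    have e2 : f c = Sum.inr (Sum.inl c.1.2) := by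
      have : c ∈ fib (Sum.inr (Sum.inl c.1.2)) := by
        rw [hfib_corn _ ((hmemS' _).mpr h2)]
        exact hmem_corn c _ (by simp [tri])
      simpa [fib] using this
    rw [e1] at e2
    exact Sum.inl_ne_inr e2


/-- indicator for propagation -/
def gg (S : Set P.Vtx) : P.Vtx → Prop
  | Sum.inl i => Sum.inl i ∈ S
  | Sum.inr (Sum.inl j) => (Sum.inr (Sum.inl j) : P.Vtx) ∉ S
  | Sum.inr (Sum.inr c) => (Sum.inl c.1.1 : P.Vtx) ∈ S

lemma gg_adj {S : Set P.Vtx}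
    (hcov : ∀ c : P.Corner, (Sum.inl c.1.1 : P.Vtx) ∈ S ∨ (Sum.inr (Sum.inl c.1.2) : P.Vtx) ∈ S)
    (hind : ∀ c : P.Corner, ¬((Sum.inl c.1.1 : P.Vtx) ∈ S ∧ (Sum.inr (Sum.inl c.1.2) : P.Vtx) ∈ S))
    {a b : P.Vtx} (hab : P.graph.Adj a b) : P.gg S a ↔ P.gg S b := by
  have key : ∀ c : P.Corner, (Sum.inl c.1.1 : P.Vtx) ∈ S ↔ (Sum.inr (Sum.inl c.1.2) : P.Vtx) ∉ S := by
    intro c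
    constructor
    · intro h1 h2; exact hind c ⟨h1, h2⟩
    · intro h2; rcases hcov c with h | h
      · exact h
      · exact absurd h h2
  rcases a with i | j | c <;> rcases b with i' | j' | c'
  · exact absurd hab (P.not_adj_HH)
  · exact key ⟨(i, j'), (P.adj_HV).mp hab⟩
  · have h := (P.adj_Hc).mp hab
    simp only [gg]
    rw [h]
  · exact (key ⟨(i', j), (P.adj_HV).mp hab.symm⟩).symm |>.not_right.symm |> fun h => by
      simp only [gg]; constructor
      · intro hj; exact ((key ⟨(i', j), (P.adj_HV).mp hab.symm⟩).mpr hj)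
      · intro hi; exact (key ⟨(i', j), (P.adj_HV).mp hab.symm⟩).mp hi
  · exact absurd hab (P.not_adj_VV)
  · have h := (P.adj_Vc).mp hab
    simp only [gg]
    rw [← h]
    exact (key c').symm
  · have h := (P.adj_Hc).mp hab.symm
    simp only [gg]
    rw [h]
  · have h := (P.adj_Vc).mp hab.symm
    simp only [gg]
    constructor
    · intro hi hj; exact hind c ⟨hi, h ▸ hj⟩
    · intro hj
      rcases hcov c with h1 | h1
      · exact h1
      · exact absurd (h ▸ h1) hj
  · exact absurd hab (P.not_adj_cc)

lemma gg_const {S : Set P.Vtx} (hconn : P.graph.Connected)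
    (hcov : ∀ c : P.Corner, (Sum.inl c.1.1 : P.Vtx) ∈ S ∨ (Sum.inr (Sum.inl c.1.2) : P.Vtx) ∈ S)
    (hind : ∀ c : P.Corner, ¬((Sum.inl c.1.1 : P.Vtx) ∈ S ∧ (Sum.inr (Sum.inl c.1.2) : P.Vtx) ∈ S))
    (a b : P.Vtx) : P.gg S a ↔ P.gg S b := by
  obtain ⟨w⟩ := hconn a b
  induction w with
  | nil => exact Iff.rfl
  | cons h _ ih => exact (P.gg_adj hcov hind h).trans ih

end KPolygon


/-- Let `k ≥ 2` and let `P` be (the graph of) a `k`-polygon, with `H` its set of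
horizontal segments and `V` its set of vertical segments. Then the triangle hitting
sets of `P` of size `k` are exactly the set of horizontal segments and the set of
vertical segments. -/
theorem stmt6 {k : ℕ} (hk : 2 ≤ k) (P : KPolygon k) (hconn : P.graph.Connected)
    (S : Set P.Vtx) :
    ((∀ T : Finset P.Vtx, IsTriangle P.graph T → ∃ x ∈ S, x ∈ T) ∧ S.ncard = k) ↔
      (S = Set.range (fun i : Fin k => (Sum.inl i : P.Vtx)) ∨
        S = Set.range (fun j : Fin k => (Sum.inr (Sum.inl j) : P.Vtx))) := by
  have hinjH : Function.Injective (fun i : Fin k => (Sum.inl i : P.Vtx)) := by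
    intro a b h; simpa using h
  have hinjV : Function.Injective (fun j : Fin k => (Sum.inr (Sum.inl j) : P.Vtx)) := by
    intro a b h; simpa using h
  have hncH : (Set.range (fun i : Fin k => (Sum.inl i : P.Vtx))).ncard = k := by
    rw [← Nat.card_coe_set_eq, Nat.card_range_of_injective hinjH]; simp
  have hncV : (Set.range (fun j : Fin k => (Sum.inr (Sum.inl j) : P.Vtx))).ncard = k := by
    rw [← Nat.card_coe_set_eq, Nat.card_range_of_injective hinjV]; simp
  constructor
  · rintro ⟨hhit, hcard⟩
    obtain ⟨hnoc, hcov, hind⟩ := P.key_structure hk hhit hcard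
    have hSfin : S.Finite := by
      by_contra h
      rw [Set.Infinite.ncard h] at hcard; omega
    have i0 : Fin k := ⟨0, by omega⟩
    by_cases h0 : (Sum.inl i0 : P.Vtx) ∈ S
    · left
      have hsub : Set.range (fun i : Fin k => (Sum.inl i : P.Vtx)) ⊆ S := by
        rintro x ⟨i, rfl⟩
        exact (P.gg_const hconn hcov hind (Sum.inl i) (Sum.inl i0)).mpr h0
      exact (Set.eq_of_subset_of_ncard_le hsub (by rw [hcard, hncH]) hSfin).symm
    · right
      have hnoH : ∀ i : Fin k, (Sum.inl i : P.Vtx) ∉ S := by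
        intro i hi
        exact h0 ((P.gg_const hconn hcov hind (Sum.inl i0) (Sum.inl i)).mpr hi)
      have hsub : S ⊆ Set.range (fun j : Fin k => (Sum.inr (Sum.inl j) : P.Vtx)) := by
        intro x hx
        rcases x with i | j | c
        · exact absurd hx (hnoH i)
        · exact ⟨j, rfl⟩
        · exact absurd hx (hnoc c)
      exact Set.eq_of_subset_of_ncard_le hsub (by rw [hcard, hncV]) (Set.finite_range _)
  · rintro (rfl | rfl)
    · refine ⟨?_, hncH⟩
      intro T hT
      obtain ⟨⟨i, hi⟩, _⟩ := P.tri_mem hT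
      exact ⟨Sum.inl i, ⟨i, rfl⟩, hi⟩
    · refine ⟨?_, hncV⟩
      intro T hT
      obtain ⟨_, ⟨j, hj⟩⟩ := P.tri_mem hT
      exact ⟨Sum.inr (Sum.inl j), ⟨j, rfl⟩, hj⟩
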